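/- If w is a nonempty palindrome of even length that is a palstar, then its factorization into prime palstars w = x₁x₂⋯xₙ satisfies xᵢ = x_{n+1−i} for all 1 ≤ i ≤ n. -/

import Mathlib

open scoped Computability

/-- `PAL` is the set of nonempty even-length palindromes `x ++ xᴿ`. -/
def PAL (α : Type) : Language α := {w | ∃ x : List α, x ≠ [] ∧ w = x ++ x.reverse}

/-- `PALSTAR` is the Kleene star of `PAL`. -/
def PALSTAR (α : Type) : Language α := (PAL α)∗

/-- A prime palstar: a nonempty palstar that is not a product of two nonempty palstars. -/
def IsPrimePalstar {α : Type} (w : List α) : Prop :=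
  w ∈ PALSTAR α ∧ w ≠ [] ∧
    ¬ ∃ u v : List α, u ∈ PALSTAR α ∧ v ∈ PALSTAR α ∧ u ≠ [] ∧ v ≠ [] ∧ w = u ++ v

namespace PalstarAux

variable {α : Type}

lemma pal_ne {w : List α} (h : w ∈ PAL α) : w ≠ [] := by
  obtain ⟨x, hx, rfl⟩ := h; simp [hx]

lemma pal_rev {w : List α} (h : w ∈ PAL α) : w.reverse = w := by
  obtain ⟨x, hx, rfl⟩ := h; simp

lemma pal_even {w : List α} (h : w ∈ PAL α) : Even w.length := by
  obtain ⟨x, hx, rfl⟩ := h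
  exact ⟨x.length, by simp⟩

lemma mem_pal_of {w : List α} (hne : w ≠ []) (hrev : w.reverse = w)
    (hev : Even w.length) : w ∈ PAL α := by
  refine ⟨w.take (w.length / 2), ?_, ?_⟩
  · have hlen : 0 < w.length := List.length_pos_iff.mpr hne
    obtain ⟨k, hk⟩ := hev
    intro h
    have h2 := congrArg List.length h
    simp only [List.length_take, List.length_nil] at h2
    omega
  · obtain ⟨k, hk⟩ := hev
    have h1 : w = w.take (w.length / 2) ++ w.drop (w.length / 2) :=
      (List.take_append_drop _ w).symm
    have hlen : (w.drop (w.length / 2)).reverse.length = (w.take (w.length / 2)).length := by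
      simp; omega
    have h2 : (w.drop (w.length / 2)).reverse ++ (w.take (w.length / 2)).reverse
        = w.take (w.length / 2) ++ w.drop (w.length / 2) := by
      rw [← List.reverse_append, ← h1, hrev, h1]
    have h3 := (List.append_inj h2 (by simpa using hlen)).1
    have h4 : w.drop (w.length / 2) = (w.take (w.length / 2)).reverse := by
      calc w.drop (w.length / 2) = (w.drop (w.length / 2)).reverse.reverse := by simp
        _ = (w.take (w.length / 2)).reverse := by rw [h3]
    conv_lhs => rw [h1, h4]

lemma pal_sub_star {w : List α} (h : w ∈ PAL α) : w ∈ PALSTAR α := by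
  have hw : w = [w].flatten := by simp
  rw [hw]
  exact Language.join_mem_kstar (by simpa using h)

lemma star_append {u v : List α} (hu : u ∈ PALSTAR α) (hv : v ∈ PALSTAR α) :
    u ++ v ∈ PALSTAR α := by
  obtain ⟨L1, rfl, h1⟩ := Language.mem_kstar.mp hu
  obtain ⟨L2, rfl, h2⟩ := Language.mem_kstar.mp hv
  rw [← List.flatten_append]
  exact Language.join_mem_kstar (by
    intro y hy
    rcases List.mem_append.mp hy with h | h
    · exact h1 y h
    · exact h2 y h)

lemma prime_mem_pal {w : List α} (h : IsPrimePalstar w) : w ∈ PAL α := by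
  obtain ⟨hst, hne, hnsplit⟩ := h
  obtain ⟨L, rfl, hL⟩ := Language.mem_kstar_iff_exists_nonempty.mp hst
  match L with
  | [] => simp at hne
  | [a] => simpa using (hL a (by simp)).1
  | a :: b :: rest =>
    exfalso
    apply hnsplit
    refine ⟨a, (b :: rest).flatten, pal_sub_star (hL a (by simp)).1, ?_,
      (hL a (by simp)).2, ?_, by simp⟩
    · exact Language.join_mem_kstar (fun y hy => (hL y (by simp [hy])).1)
    · simp only [List.flatten_cons, ne_eq, List.append_eq_nil_iff]
      intro ⟨hb, _⟩
      exact (hL b (by simp)).2 hb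

lemma not_prime_split {v A B : List α} (hv : IsPrimePalstar v) (hA : A ∈ PALSTAR α)
    (hB : B ∈ PALSTAR α) (hAne : A ≠ []) (hBne : B ≠ []) (h : v = A ++ B) : False :=
  hv.2.2 ⟨A, B, hA, hB, hAne, hBne, h⟩

/-- shift: `x ++ (y ++ x)^k = (x ++ y)^k ++ x` -/
lemma pow_shift (x y : List α) (k : ℕ) :
    x ++ (List.replicate k (y ++ x)).flatten = (List.replicate k (x ++ y)).flatten ++ x := by
  induction k with
  | zero => simp
  | succ k ih =>
    simp only [List.replicate_succ, List.flatten_cons]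
    calc x ++ ((y ++ x) ++ (List.replicate k (y ++ x)).flatten)
        = (x ++ y) ++ (x ++ (List.replicate k (y ++ x)).flatten) := by
          simp [List.append_assoc]
      _ = (x ++ y) ++ ((List.replicate k (x ++ y)).flatten ++ x) := by rw [ih]
      _ = (x ++ y) ++ (List.replicate k (x ++ y)).flatten ++ x := by
          simp [List.append_assoc]

lemma rev_pow (s : List α) (k : ℕ) :
    ((List.replicate k s).flatten).reverse = (List.replicate k s.reverse).flatten := by
  induction k with
  | zero => simp
  | succ k ih =>
    simp only [List.replicate_succ, List.flatten_cons, List.reverse_append, ih]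
    have h := pow_shift s.reverse ([] : List α) k
    simp only [List.append_nil, List.nil_append] at h
    exact h.symm

lemma replen (s : List α) (k : ℕ) :
    (List.replicate k s).flatten.length = k * s.length := by
  induction k with
  | zero => simp
  | succ k ih =>
    simp only [List.replicate_succ, List.flatten_cons, List.length_append, ih]
    ring

/-- conjugacy: `a ++ z = z ++ b` with `|a| = |b|`, `a ≠ []`, gives the standard
decomposition. -/
lemma conj : ∀ (n : ℕ) (z a b : List α), z.length ≤ n → a ≠ [] → a.length = b.length →
    a ++ z = z ++ b →
    ∃ (p : List α) (q : List α) (k : ℕ), a = p ++ q ∧ b = q ++ p ∧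
      z = (List.replicate k (p ++ q)).flatten ++ p := by
  intro n
  induction n with
  | zero =>
    intro z a b hz _ hlen h
    have hz0 : z = [] := List.length_eq_zero_iff.mp (Nat.le_zero.mp hz)
    subst hz0
    simp only [List.append_nil, List.nil_append] at h
    exact ⟨[], a, 0, by simp, by simp [h], by simp⟩
  | succ n ih =>
    intro z a b hz hane hlen h
    by_cases hle : z.length ≤ a.length
    · -- z is a prefix of a
      have hpz : z <+: a := by
        have h1 : z <+: a ++ z := h ▸ List.prefix_append z b
        exact List.prefix_of_prefix_length_le h1 (List.prefix_append a z) hle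
      obtain ⟨c, rfl⟩ := hpz
      have hb : b = c ++ z := by
        have h2 : z ++ (c ++ z) = z ++ b := by
          rw [← h]; simp [List.append_assoc]
        exact (List.append_cancel_left h2).symm
      exact ⟨z, c, 0, rfl, hb, by simp⟩
    · -- a is a proper prefix of z
      push_neg at hle
      have hpz : a <+: z := by
        exact List.prefix_of_prefix_length_le (List.prefix_append a z)
          ((h.symm) ▸ List.prefix_append z b) (le_of_lt hle)
      obtain ⟨z', rfl⟩ := hpz
      have h' : a ++ z' = z' ++ b := by
        have h2 : a ++ (a ++ z') = a ++ (z' ++ b) := by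
          simpa [List.append_assoc] using h
        exact List.append_cancel_left h2
      have ha : 0 < a.length := List.length_pos_iff.mpr hane
      have hz' : z'.length ≤ n := by
        simp only [List.length_append] at hz
        omega
      obtain ⟨p, q, k, hp, hq, hzz⟩ := ih z' a b hz' hane hlen h'
      refine ⟨p, q, k + 1, hp, hq, ?_⟩
      rw [List.replicate_succ, List.flatten_cons, hzz, hp]
      simp [List.append_assoc]

/-- The key lemma: no prime palstar is a proper prefix of another prime palstar. -/
lemma prime_prefix {u v : List α} (hu : IsPrimePalstar u) (hv : IsPrimePalstar v)
    (h : u <+: v) : u = v := by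
  obtain ⟨t, rfl⟩ := h
  rcases eq_or_ne t [] with rfl | htne
  · simp
  exfalso
  have hupal := prime_mem_pal hu
  have hvpal := prime_mem_pal hv
  have hur : u.reverse = u := pal_rev hupal
  have hune : u ≠ [] := hu.2.1
  have huev : Even u.length := pal_even hupal
  have hvev : Even (u ++ t).length := pal_even hvpal
  have htev : Even t.length := by
    rw [Nat.even_iff] at *
    simp only [List.length_append] at hvev
    omega
  -- key equation: u ++ t = t.reverse ++ u
  have E : u ++ t = t.reverse ++ u := by
    conv_lhs => rw [← pal_rev hvpal]
    rw [List.reverse_append, hur]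
  by_cases hle : u.length ≤ t.length
  · -- u is a prefix of t.reverse
    have hpz : u <+: t.reverse := by
      have h1 : t.reverse <+: u ++ t := E ▸ List.prefix_append t.reverse u
      exact List.prefix_of_prefix_length_le (List.prefix_append u t) h1 (by simpa using hle)
    obtain ⟨y, hy⟩ := hpz
    have hty : t = y.reverse ++ u := by
      calc t = t.reverse.reverse := by simp
        _ = (u ++ y).reverse := by rw [hy]
        _ = y.reverse ++ u := by rw [List.reverse_append, hur]
    have hyy : y.reverse = y := by
      have h1 : u ++ (y.reverse ++ u) = (u ++ y) ++ u := by
        rw [← hty, hy]; exact E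
      have h2 : y.reverse ++ u = y ++ u := by
        rw [List.append_assoc] at h1
        exact List.append_cancel_left h1
      exact List.append_cancel_right h2
    rcases eq_or_ne y [] with rfl | hyne
    · -- v = u ++ u
      refine not_prime_split hv hu.1 hu.1 hune hune ?_
      simp only [List.reverse_nil, List.nil_append] at hty
      rw [hty]
    · -- v = u ++ (y ++ u), with y a nonempty even palindrome
      have hyev : Even y.length := by
        have hh := congrArg List.length hty
        simp only [List.length_append, List.length_reverse] at hh
        rw [Nat.even_iff] at *
        omega
      have hypal : y ∈ PAL α := mem_pal_of hyne hyy hyev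
      refine not_prime_split hv hu.1 (star_append (pal_sub_star hypal) hu.1) hune
        (by simp [hyne]) ?_
      rw [hty, hyy]
  · -- t.reverse is a proper prefix of u; conjugacy
    push_neg at hle
    obtain ⟨p, q, k, hp, hq, hz⟩ := conj u.length u t.reverse t (le_refl _)
      (by simpa using htne) (by simp) E.symm
    rcases eq_or_ne q [] with rfl | hqne
    · -- t is an even palindrome itself
      have htr : t.reverse = t := by rw [hp, hq]; simp
      have htpal : t ∈ PAL α := mem_pal_of htne htr htev
      exact not_prime_split hv hu.1 (pal_sub_star htpal) hune htne rfl
    rcases eq_or_ne p [] with rfl | hpne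
    · have htr : t.reverse = t := by rw [hp, hq]; simp
      have htpal : t ∈ PAL α := mem_pal_of htne htr htev
      exact not_prime_split hv hu.1 (pal_sub_star htpal) hune htne rfl
    -- both p, q nonempty; k ≥ 1
    obtain ⟨k', rfl⟩ : ∃ k', k = k' + 1 := by
      refine ⟨k - 1, ?_⟩
      rcases Nat.eq_zero_or_pos k with rfl | hk
      · exfalso
        simp only [List.replicate_zero, List.flatten_nil, List.nil_append] at hz
        have h1 := congrArg List.length hp
        have h2 := congrArg List.length hz
        simp only [List.length_reverse, List.length_append] at h1 h2
        have hq1 : 0 < q.length := List.length_pos_iff.mpr hqne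
        omega
      · omega
    -- u palindrome gives p = pᴿ, q = qᴿ
    have hu2 : (List.replicate (k' + 1) (p ++ q)).flatten ++ p
        = (List.replicate (k' + 1) (p.reverse ++ q.reverse)).flatten ++ p.reverse := by
      conv_lhs => rw [← hz, ← hur, hz]
      rw [List.reverse_append, rev_pow, List.reverse_append, pow_shift]
    have hu3 : p ++ (q ++ ((List.replicate k' (p ++ q)).flatten ++ p))
        = p.reverse ++ (q.reverse ++
          ((List.replicate k' (p.reverse ++ q.reverse)).flatten ++ p.reverse)) := by
      simpa only [List.replicate_succ, List.flatten_cons, List.append_assoc] using hu2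
    have hpp : p = p.reverse := (List.append_inj hu3 (by simp)).1
    have hu4 := (List.append_inj hu3 (by simp)).2
    have hqq : q = q.reverse := (List.append_inj hu4 (by simp)).1
    -- parity: |p| even, |q| even
    have hulen : u.length = (k' + 1) * (p.length + q.length) + p.length := by
      rw [hz]
      simp [replen]
    have htlen : t.length = q.length + p.length := by rw [hq]; simp
    have hpqev : Even (p.length + q.length) := by
      rw [Nat.even_iff] at htev ⊢
      omega
    obtain ⟨m, hm⟩ : Even ((k' + 1) * (p.length + q.length)) := hpqev.mul_left _
    rw [hm] at hulen
    have hpev : Even p.length := by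
      rw [Nat.even_iff] at huev ⊢
      omega
    have hqev : Even q.length := by
      rw [Nat.even_iff] at hpqev hpev ⊢
      omega
    have hppal : p ∈ PAL α := mem_pal_of hpne hpp.symm hpev
    have hqpal : q ∈ PAL α := mem_pal_of hqne hqq.symm hqev
    have htstar : t ∈ PALSTAR α := by
      rw [hq]
      exact star_append (pal_sub_star hqpal) (pal_sub_star hppal)
    exact not_prime_split hv hu.1 htstar hune htne rfl

/-- Unique factorization into prime palstars. -/
lemma unique_fact (l1 : List (List α)) : ∀ (l2 : List (List α)),
    (∀ x ∈ l1, IsPrimePalstar x) → (∀ x ∈ l2, IsPrimePalstar x) →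
    l1.flatten = l2.flatten → l1 = l2 := by
  induction l1 with
  | nil =>
    intro l2 _ h2 hf
    cases l2 with
    | nil => rfl
    | cons b l2 =>
      exfalso
      have hb := (h2 b (by simp)).2.1
      simp only [List.flatten_nil, List.flatten_cons] at hf
      exact hb (List.append_eq_nil_iff.mp hf.symm).1
  | cons a l1 ih =>
    intro l2 h1 h2 hf
    cases l2 with
    | nil =>
      exfalso
      have ha := (h1 a (by simp)).2.1
      simp only [List.flatten_cons, List.flatten_nil] at hf
      exact ha (List.append_eq_nil_iff.mp hf).1
    | cons b l2 =>
      simp only [List.flatten_cons] at hf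
      have hab : a = b := by
        rcases List.prefix_or_prefix_of_prefix (List.prefix_append a l1.flatten)
          (hf ▸ List.prefix_append b l2.flatten) with h | h
        · exact prime_prefix (h1 a (by simp)) (h2 b (by simp)) h
        · exact (prime_prefix (h2 b (by simp)) (h1 a (by simp)) h).symm
      subst hab
      have hrest : l1.flatten = l2.flatten := List.append_cancel_left hf
      rw [ih l2 (fun x hx => h1 x (by simp [hx])) (fun x hx => h2 x (by simp [hx])) hrest]

end PalstarAux

/-- A factorization of a nonempty even-length palindromic palstar into prime
palstars `w = x₁ ⋯ xₙ` satisfies `xᵢ = x_{n+1-i}` for `1 ≤ i ≤ n`. -/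
theorem palindrome_factorization_symmetric {α : Type} (w : List α)
    (hne : w ≠ []) (hpal : w.reverse = w) (heven : Even w.length)
    (hw : w ∈ PALSTAR α) (l : List (List α))
    (hl : ∀ x ∈ l, IsPrimePalstar x) (hfl : w = l.flatten) :
    ∀ i (hi : i < l.length), l[i] = l[l.length - 1 - i]'(by omega) := by
  have hmap : l.map List.reverse = l := by
    calc l.map List.reverse = l.map id := List.map_congr_left (fun x hx => by
          simpa using PalstarAux.pal_rev (PalstarAux.prime_mem_pal (hl x hx)))
      _ = l := List.map_id l
  have hflat : l.flatten = l.reverse.flatten := by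
    calc l.flatten = l.flatten.reverse := by rw [← hfl, hpal]
      _ = (l.map List.reverse).reverse.flatten := List.reverse_flatten
      _ = l.reverse.flatten := by rw [hmap]
  have hrev : l = l.reverse :=
    PalstarAux.unique_fact l l.reverse hl
      (fun x hx => hl x (List.mem_reverse.mp hx)) hflat
  intro i hi
  have h1 : l[i] = l.reverse[i]'(by simpa using hi) := List.getElem_of_eq hrev hi
  rw [h1, List.getElem_reverse]
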